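/- Let r_{n,b}(·;z) be the unique solution of r(x) = ζ + ζ v r(x) U_r(x) with sup_x |r(x)| ≤ 2/η, and let d_{n,b}(x;z) = r_{n,b}(x;z) − w(z). Then for every ε > 0 there exists a number L = L(ε) such that for all sufficiently large b and n (with b = n^χ, 1/3 < χ < 1), sup over x ∈ B_L of |d_{n,b}(x;z)| ≤ ε for all z ∈ Λ_η. -/

import Mathlib

open MeasureTheory ProbabilityTheory Filter Asymptotics

noncomputable section

/-- The variance profile `U^{(b)}(x,y) = b⁻¹ · u((x-y)/b)` for integer coordinates. -/
def bandU (u : ℝ → ℝ) (b : ℝ) (x y : ℤ) : ℝ := b⁻¹ * u (((x : ℝ) - (y : ℝ)) / b)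

/-- The integer coordinate of the index `i : Fin (2n+1)`, running over `-n, …, n`. -/
def coordZ (n : ℕ) (i : Fin (2 * n + 1)) : ℤ := (i : ℤ) - (n : ℤ)

/-- The index in `Fin (2n+1)` of the integer coordinate `x` (for `|x| ≤ n`). -/
def coordFin (n : ℕ) (x : ℤ) : Fin (2 * n + 1) :=
  ⟨(x + (n : ℤ)).toNat % (2 * n + 1), Nat.mod_lt _ (by omega)⟩

/-- The band random matrix `H^{(n,b)}` built from the Gaussian field `a`. -/
def bandH {Ω : Type*} (u : ℝ → ℝ) (b : ℝ) (n : ℕ) (a : ℤ → ℤ → Ω → ℝ) (ω : Ω) :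
    Matrix (Fin (2 * n + 1)) (Fin (2 * n + 1)) ℝ := fun i j =>
  a (min (coordZ n i) (coordZ n j)) (max (coordZ n i) (coordZ n j)) ω *
    Real.sqrt (bandU u b (coordZ n i) (coordZ n j))

/-- The resolvent `(H - z·I)⁻¹` of a real matrix, as a complex matrix. -/
def resolv {N : ℕ} (H : Matrix (Fin N) (Fin N) ℝ) (z : ℂ) : Matrix (Fin N) (Fin N) ℂ :=
  (H.map (fun t => (t : ℂ)) - z • 1)⁻¹

/-- Entry `G^{(n,b)}(x,y;z)` of the resolvent, indexed by integers `x, y ∈ {-n,…,n}`. -/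
def Gent {Ω : Type*} (u : ℝ → ℝ) (b : ℝ) (n : ℕ) (a : ℤ → ℤ → Ω → ℝ) (z : ℂ) (ω : Ω)
    (x y : ℤ) : ℂ :=
  resolv (bandH u b n a ω) z (coordFin n x) (coordFin n y)

/-- Entry `(G²)(x,y;z)` of the matrix square of the resolvent. -/
def Gent2 {Ω : Type*} (u : ℝ → ℝ) (b : ℝ) (n : ℕ) (a : ℤ → ℤ → Ω → ℝ) (z : ℂ) (ω : Ω)
    (x y : ℤ) : ℂ :=
  (resolv (bandH u b n a ω) z * resolv (bandH u b n a ω) z) (coordFin n x) (coordFin n y)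

/-- The normalized trace `⟨G⟩ = N⁻¹ Tr G^{(n,b)}(z)`. -/
def traceG {Ω : Type*} (u : ℝ → ℝ) (b : ℝ) (n : ℕ) (a : ℤ → ℤ → Ω → ℝ) (z : ℂ) (ω : Ω) : ℂ :=
  ((2 * n + 1 : ℕ) : ℂ)⁻¹ * Matrix.trace (resolv (bandH u b n a ω) z)

/-- `U_G(x) = Σ_{|s| ≤ n} G(s,s) U^{(b)}(s,x)`. -/
def UG {Ω : Type*} (u : ℝ → ℝ) (b : ℝ) (n : ℕ) (a : ℤ → ℤ → Ω → ℝ) (z : ℂ) (ω : Ω)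
    (x : ℤ) : ℂ :=
  ∑ s ∈ Finset.Icc (-(n : ℤ)) (n : ℤ), Gent u b n a z ω s s * (bandU u b s x : ℂ)

/-- The matrix `U^{(b)}` as a `(2n+1) × (2n+1)` matrix. -/
def bandUmat (u : ℝ → ℝ) (b : ℝ) (n : ℕ) : Matrix (Fin (2 * n + 1)) (Fin (2 * n + 1)) ℝ :=
  fun i j => bandU u b (coordZ n i) (coordZ n j)

/-- The Fourier transform `ũ_F(p) = ∫ u(t) e^{ipt} dt`. -/
def uFourier (u : ℝ → ℝ) (p : ℝ) : ℂ :=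
  ∫ t : ℝ, (u t : ℂ) * Complex.exp (Complex.I * (p : ℂ) * (t : ℂ))
/-- Centered random variable `ξ° = ξ - E ξ`. -/
def centered {Ω : Type*} [MeasurableSpace Ω] (μ : Measure Ω) (f : Ω → ℂ) (ω : Ω) : ℂ :=
  f ω - ∫ ω', f ω' ∂μ

/-- Variance `E|ξ - E ξ|²` of a complex random variable. -/
def varC {Ω : Type*} [MeasurableSpace Ω] (μ : Measure Ω) (f : Ω → ℂ) : ℝ :=
  ∫ ω, ‖f ω - ∫ ω', f ω' ∂μ‖ ^ 2 ∂μ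

/-!
Write `ζ = -z⁻¹` and `T(x) = Σ_s r(s) U(s,x)`. Subtracting `w = ζ + ζ v w²` from
`r(x) = ζ + ζ v r(x) T(x)` gives `(r(x) - w)(1 - ζ v w) = ζ v r(x) (T(x) - w)`, and for
`|Im z| ≥ η = 2√v + 1` the factor `‖ζ v r(x)‖ / ‖1 - ζ v w‖` is at most `2/3`. Moreover
`T(x) - w = Σ_s (r(s) - w) U(s,x) + w (Σ_s U(s,x) - 1)`. Comparing the sums of the monotone profile
`u` with its integral shows that at distance `bM` from the boundary the rows of `U` sum to `1` up
to `θ = 2 (∫_M^∞ u + ū/b)`, and put mass at most `θ` outside the window `|s - x| < bM`. Hence the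
error on `B_{(j+1)M}` is at most `3/4` of the error on `B_{jM}` plus `O(θ/η)`; starting from the
trivial bound `3/η` and iterating `k` times leaves `(3/4)^k · 3/η + O(θ/η)`, which is small once
`k`, `M` and `b = n^χ` are large.
-/

open Set

theorem sum_le_add_integral_Ioi_of_antitoneOn {f : ℝ → ℝ} (hf : AntitoneOn f (Ici 0))
    (hf0 : ∀ t, 0 ≤ f t) (hfi : IntegrableOn f (Ioi 0)) (m : ℕ) (F : Finset ℤ)
    (hF : ∀ k ∈ F, (m : ℤ) ≤ k) :
    ∑ k ∈ F, f k ≤ f m + ∫ t in Ioi (m : ℝ), f t := by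
  set N := F.sup fun k : ℤ => (k - m).toNat
  have hsub : F ⊆ (Finset.range (N + 1)).image fun i : ℕ => (m : ℤ) + i := by
    intro k hk
    have hkN := Finset.le_sup (f := fun k : ℤ => (k - m).toNat) hk
    have hmk := hF k hk
    simp only [Finset.mem_image, Finset.mem_range]
    exact ⟨(k - m).toNat, by omega, by omega⟩
  have hsum : ∑ i ∈ Finset.range N, f ((m : ℝ) + (i + 1 : ℕ)) ≤ ∫ t in (m : ℝ)..m + N, f t :=
    (hf.mono fun t ht => le_trans m.cast_nonneg ht.1).sum_le_integral
  have htail : ∫ t in (m : ℝ)..m + N, f t ≤ ∫ t in Ioi (m : ℝ), f t := by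
    rw [intervalIntegral.integral_of_le (by simp)]
    exact setIntegral_mono_set (hfi.mono_set (Ioi_subset_Ioi m.cast_nonneg))
      (ae_of_all _ hf0) Ioc_subset_Ioi_self.eventuallyLE
  calc ∑ k ∈ F, f k
      ≤ ∑ k ∈ (Finset.range (N + 1)).image (fun i : ℕ => (m : ℤ) + i), f k :=
        Finset.sum_le_sum_of_subset_of_nonneg hsub fun _ _ _ => hf0 _
    _ = ∑ i ∈ Finset.range (N + 1), f (m + i) := by
        rw [Finset.sum_image fun i _ j _ h => by omega]
        push_cast; rfl
    _ = f m + ∑ i ∈ Finset.range N, f ((m : ℝ) + (i + 1 : ℕ)) := by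
        rw [Finset.sum_range_succ', add_comm]; simp
    _ ≤ f m + ∫ t in Ioi (m : ℝ), f t := by linarith

structure IsBandProfile (u : ℝ → ℝ) : Prop where
  even : ∀ t, u (-t) = u t
  nonneg : ∀ t, 0 ≤ u t
  antitone : ∀ ⦃s t : ℝ⦄, 0 ≤ s → s ≤ t → u t ≤ u s
  integrable : Integrable u
  integral_eq_one : ∫ t, u t = 1

def bandProfile (u : ℝ → ℝ) (b t : ℝ) : ℝ := b⁻¹ * u (t / b)

section bandProfile

variable {u : ℝ → ℝ} {b ub : ℝ}

theorem bandU_eq_bandProfile (u : ℝ → ℝ) (b : ℝ) (s x : ℤ) :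
    bandU u b s x = bandProfile u b ((s - x : ℤ) : ℝ) := by
  simp [bandU, bandProfile]

theorem bandProfile_le (hb : 0 < b) (hub : ∀ t, u t ≤ ub) (t : ℝ) :
    bandProfile u b t ≤ ub / b := by
  rw [bandProfile, div_eq_inv_mul ub]
  exact mul_le_mul_of_nonneg_left (hub _) (inv_nonneg.2 hb.le)

theorem integral_Ioi_bandProfile (hb : 0 < b) (c : ℝ) :
    ∫ t in Ioi c, bandProfile u b t = ∫ t in Ioi (c / b), u t := by
  simp_rw [bandProfile, integral_const_mul, div_eq_inv_mul,
    integral_comp_mul_left_Ioi u c (inv_pos.2 hb), smul_eq_mul, inv_inv, ← mul_assoc,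
    inv_mul_cancel₀ hb.ne', one_mul]

theorem intervalIntegral_bandProfile (hb : 0 < b) (c : ℝ) :
    ∫ t in (0 : ℝ)..c, bandProfile u b t = ∫ t in (0 : ℝ)..c / b, u t := by
  simp_rw [bandProfile, intervalIntegral.integral_const_mul,
    intervalIntegral.integral_comp_div u hb.ne', zero_div, smul_eq_mul, ← mul_assoc,
    inv_mul_cancel₀ hb.ne', one_mul]

end bandProfile

namespace IsBandProfile

variable {u : ℝ → ℝ} {b ub : ℝ}

theorem integral_Ioi_zero (hu : IsBandProfile u) : ∫ t in Ioi 0, u t = 1 / 2 := by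
  have hsymm : ∫ t in Iic 0, u t = ∫ t in Ioi 0, u t := by
    simpa [hu.even] using (integral_comp_neg_Ioi 0 u).symm
  have := intervalIntegral.integral_Iic_add_Ioi (b := 0) hu.integrable.integrableOn
    hu.integrable.integrableOn
  rw [hsymm, hu.integral_eq_one] at this
  linarith

theorem bandProfile_nonneg (hu : IsBandProfile u) (hb : 0 < b) (t : ℝ) :
    0 ≤ bandProfile u b t :=
  mul_nonneg (inv_nonneg.2 hb.le) (hu.nonneg _)

theorem bandProfile_neg (hu : IsBandProfile u) (t : ℝ) :
    bandProfile u b (-t) = bandProfile u b t := by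
  rw [bandProfile, bandProfile, neg_div, hu.even]

theorem antitoneOn_bandProfile (hu : IsBandProfile u) (hb : 0 < b) :
    AntitoneOn (bandProfile u b) (Ici 0) := fun s hs t _ hst =>
  mul_le_mul_of_nonneg_left (hu.antitone (div_nonneg hs hb.le) (by gcongr))
    (inv_nonneg.2 hb.le)

theorem integrable_bandProfile (hu : IsBandProfile u) (hb : 0 < b) :
    Integrable (bandProfile u b) :=
  (hu.integrable.comp_div hb.ne').const_mul _

theorem sum_bandProfile_le_of_le (hu : IsBandProfile u) (hb : 0 < b) (hub : ∀ t, u t ≤ ub)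
    (m : ℕ) (F : Finset ℤ) (hF : ∀ k ∈ F, (m : ℤ) ≤ k) :
    ∑ k ∈ F, bandProfile u b k ≤ (∫ t in Ioi (m / b : ℝ), u t) + ub / b := by
  have := sum_le_add_integral_Ioi_of_antitoneOn (hu.antitoneOn_bandProfile hb)
    (hu.bandProfile_nonneg hb) (hu.integrable_bandProfile hb).integrableOn m F hF
  rw [integral_Ioi_bandProfile hb] at this
  linarith [bandProfile_le hb hub (m : ℝ)]

theorem sum_bandProfile_le_of_le_abs (hu : IsBandProfile u) (hb : 0 < b)
    (hub : ∀ t, u t ≤ ub) (m : ℕ) (F : Finset ℤ) (hF : ∀ k ∈ F, (m : ℤ) ≤ |k|) :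
    ∑ k ∈ F, bandProfile u b k ≤ 2 * ((∫ t in Ioi (m / b : ℝ), u t) + ub / b) := by
  have hpos := hu.sum_bandProfile_le_of_le hb hub m (F.filter (0 < ·)) fun k hk => by
    rw [Finset.mem_filter] at hk
    simpa [abs_of_pos hk.2] using hF k hk.1
  have hneg := hu.sum_bandProfile_le_of_le hb hub m ((F.filter (¬ 0 < ·)).image (- ·))
    fun k hk => by
      obtain ⟨k, hk', rfl⟩ := Finset.mem_image.1 hk
      rw [Finset.mem_filter, not_lt] at hk'
      simpa [abs_of_nonpos hk'.2] using hF k hk'.1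
  rw [Finset.sum_image fun _ _ _ _ h => neg_injective h] at hneg
  simp_rw [Int.cast_neg, hu.bandProfile_neg] at hneg
  rw [← Finset.sum_filter_add_sum_filter_not F (0 < ·)]
  linarith

theorem sum_bandU_far_le (hu : IsBandProfile u) (hb : 0 < b) (hub : ∀ t, u t ≤ ub)
    (m : ℕ) (F : Finset ℤ) (x : ℤ) :
    ∑ s ∈ F with (m : ℤ) ≤ |s - x|, bandU u b s x ≤
      2 * ((∫ t in Ioi (m / b : ℝ), u t) + ub / b) := by
  have := hu.sum_bandProfile_le_of_le_abs hb hub m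
    ((F.filter ((m : ℤ) ≤ |· - x|)).image (· - x)) fun k hk => by
      obtain ⟨s, hs, rfl⟩ := Finset.mem_image.1 hk
      exact (Finset.mem_filter.1 hs).2
  rw [Finset.sum_image fun _ _ _ _ h => sub_left_injective h] at this
  simpa only [bandU_eq_bandProfile] using this

theorem sum_bandU_le (hu : IsBandProfile u) (hb : 0 < b) (hub : ∀ t, u t ≤ ub)
    (F : Finset ℤ) (x : ℤ) :
    ∑ s ∈ F, bandU u b s x ≤ 1 + 2 * (ub / b) := by
  have := hu.sum_bandU_far_le hb hub 0 F x
  simp only [Nat.cast_zero, abs_nonneg, Finset.filter_true_of_mem, implies_true,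
    zero_div] at this
  rw [hu.integral_Ioi_zero] at this
  linarith

theorem sum_range_add_le_sum_bandU (hu : IsBandProfile u) (hb : 0 < b) {n m : ℕ} {x : ℤ}
    (hx : |x| + m ≤ n) :
    ∑ i ∈ Finset.range m, (bandProfile u b i + bandProfile u b (i + 1)) ≤
      ∑ s ∈ Finset.Icc (-(n : ℤ)) n, bandU u b s x := by
  set right := (Finset.range m).image fun i : ℕ => x + i
  set left := (Finset.range m).image fun i : ℕ => x - (i + 1)
  have hsub : right ∪ left ⊆ Finset.Icc (-(n : ℤ)) n := by
    intro s hs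
    simp only [right, left, Finset.mem_union, Finset.mem_image, Finset.mem_range] at hs
    rw [Finset.mem_Icc]
    rcases hs with ⟨i, hi, rfl⟩ | ⟨i, hi, rfl⟩ <;> cases abs_cases x <;> omega
  have hdisj : Disjoint right left := by
    simp only [right, left, Finset.disjoint_left, Finset.mem_image, Finset.mem_range]
    rintro _ ⟨i, _, rfl⟩ ⟨j, _, h⟩
    omega
  have hright : ∑ s ∈ right, bandU u b s x = ∑ i ∈ Finset.range m, bandProfile u b i := by
    rw [Finset.sum_image fun _ _ _ _ h => by simpa using h]
    simp [bandU_eq_bandProfile]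
  have hleft :
      ∑ s ∈ left, bandU u b s x = ∑ i ∈ Finset.range m, bandProfile u b (i + 1) := by
    rw [Finset.sum_image fun _ _ _ _ h => by simpa using h]
    refine Finset.sum_congr rfl fun i _ => ?_
    rw [bandU_eq_bandProfile, ← hu.bandProfile_neg]
    push_cast; ring_nf
  rw [Finset.sum_add_distrib, ← hright, ← hleft, ← Finset.sum_union hdisj]
  exact Finset.sum_le_sum_of_subset_of_nonneg hsub fun s _ _ => by
    rw [bandU_eq_bandProfile]; exact hu.bandProfile_nonneg hb _

theorem one_sub_le_sum_bandU (hu : IsBandProfile u) (hb : 0 < b) (hub : ∀ t, u t ≤ ub)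
    {n m : ℕ} {x : ℤ} (hx : |x| + m ≤ n) :
    1 - 2 * ((∫ t in Ioi (m / b : ℝ), u t) + ub / b) ≤
      ∑ s ∈ Finset.Icc (-(n : ℤ)) n, bandU u b s x := by
  have hshift : ∑ i ∈ Finset.range m, bandProfile u b i - ub / b ≤
      ∑ i ∈ Finset.range m, bandProfile u b (i + 1) := by
    have := Finset.sum_range_succ' (fun i : ℕ => bandProfile u b i) m
    rw [Finset.sum_range_succ] at this
    push_cast at this
    linarith [hu.bandProfile_nonneg hb m, bandProfile_le hb hub 0]
  have hriemann :
      ∫ t in (0 : ℝ)..m, bandProfile u b t ≤ ∑ i ∈ Finset.range m, bandProfile u b i := by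
    simpa using ((hu.antitoneOn_bandProfile hb).mono Icc_subset_Ici_self).integral_le_sum
      (x₀ := 0) (a := m)
  have hsplit := intervalIntegral.integral_interval_add_Ioi (a := 0) (b := m / b)
    hu.integrable.integrableOn hu.integrable.integrableOn
  rw [hu.integral_Ioi_zero, ← intervalIntegral_bandProfile hb] at hsplit
  have hwindow := hu.sum_range_add_le_sum_bandU hb hx
  rw [Finset.sum_add_distrib] at hwindow
  have hub0 : 0 ≤ ub / b := div_nonneg ((hu.nonneg 0).trans (hub 0)) hb.le
  linarith

end IsBandProfile

theorem norm_sum_mul_sub_le {ι : Type*} (F : Finset ι) (r : ι → ℂ) (K : ι → ℝ)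
    (hK : ∀ i ∈ F, 0 ≤ K i) (w : ℂ) :
    ‖∑ i ∈ F, r i * K i - w‖ ≤ ∑ i ∈ F, ‖r i - w‖ * K i + ‖w‖ * |∑ i ∈ F, K i - 1| := by
  have hsplit : ∑ i ∈ F, r i * K i - w =
      ∑ i ∈ F, (r i - w) * K i + w * ((∑ i ∈ F, K i - 1 : ℝ) : ℂ) := by
    push_cast
    simp only [sub_mul, Finset.sum_sub_distrib, ← Finset.mul_sum]
    ring
  rw [hsplit]
  refine (norm_add_le _ _).trans (add_le_add ((norm_sum_le _ _).trans_eq ?_) ?_)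
  · refine Finset.sum_congr rfl fun i hi => ?_
    rw [norm_mul, Complex.norm_real, Real.norm_of_nonneg (hK i hi)]
  · rw [norm_mul, Complex.norm_real, Real.norm_eq_abs]

theorem norm_sub_le_of_fixedPoint {η : ℝ} {ζ v w ρ T : ℂ} (hη : 0 < η)
    (hv : 4 * ‖v‖ ≤ η ^ 2) (hζ : ‖ζ‖ ≤ 1 / η) (hw : ‖w‖ ≤ 1 / η)
    (hweq : w = ζ + ζ * v * w ^ 2) (hρ : ‖ρ‖ ≤ 2 / η) (hρeq : ρ = ζ + ζ * v * ρ * T) :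
    ‖ρ - w‖ ≤ 2 / 3 * ‖T - w‖ := by
  have hζv : ‖ζ * v‖ ≤ η / 4 := by
    calc ‖ζ * v‖ = ‖ζ‖ * ‖v‖ := norm_mul _ _
      _ ≤ 1 / η * (η ^ 2 / 4) := by gcongr; linarith
      _ = η / 4 := by field_simp
  have hw' : ‖ζ * v * w‖ ≤ 1 / 4 := by
    calc ‖ζ * v * w‖ = ‖ζ * v‖ * ‖w‖ := norm_mul _ _
      _ ≤ η / 4 * (1 / η) := by gcongr
      _ = 1 / 4 := by field_simp
  have hρ' : ‖ζ * v * ρ‖ ≤ 1 / 2 := by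
    calc ‖ζ * v * ρ‖ = ‖ζ * v‖ * ‖ρ‖ := norm_mul _ _
      _ ≤ η / 4 * (2 / η) := by gcongr
      _ = 1 / 2 := by field_simp; norm_num
  have hdenom : 3 / 4 ≤ ‖1 - ζ * v * w‖ := by
    linarith [norm_sub_norm_le (1 : ℂ) (ζ * v * w), norm_one (α := ℂ)]
  have hkey : ‖ρ - w‖ * ‖1 - ζ * v * w‖ = ‖ζ * v * ρ‖ * ‖T - w‖ := by
    rw [← norm_mul, ← norm_mul]
    congr 1
    linear_combination hρeq - hweq
  nlinarith [norm_nonneg (ρ - w), norm_nonneg (T - w)]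

structure IsAlmostStochasticBand (K : ℤ → ℤ → ℝ) (n m : ℕ) (θ : ℝ) : Prop where
  nonneg : ∀ s x, 0 ≤ K s x
  sum_le : ∀ x, ∑ s ∈ Finset.Icc (-(n : ℤ)) n, K s x ≤ 1 + θ
  le_sum : ∀ x : ℤ, |x| + m ≤ (n : ℤ) → 1 - θ ≤ ∑ s ∈ Finset.Icc (-(n : ℤ)) n, K s x
  sum_far_le : ∀ x, ∑ s ∈ Finset.Icc (-(n : ℤ)) n with (m : ℤ) ≤ |s - x|, K s x ≤ θ

namespace IsAlmostStochasticBand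

variable {K : ℤ → ℤ → ℝ} {n m : ℕ} {θ η : ℝ} {ζ v w : ℂ} {r : ℤ → ℂ}

theorem tolerance_nonneg (hK : IsAlmostStochasticBand K n m θ) : 0 ≤ θ :=
  (Finset.sum_nonneg fun s _ => hK.nonneg s 0).trans (hK.sum_far_le 0)

theorem norm_fixedPoint_sub_le_of_near (hK : IsAlmostStochasticBand K n m θ)
    (hθ : θ ≤ 1 / 8) (hη : 0 < η) (hv : 4 * ‖v‖ ≤ η ^ 2) (hζ : ‖ζ‖ ≤ 1 / η)
    (hw : ‖w‖ ≤ 1 / η) (hweq : w = ζ + ζ * v * w ^ 2)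
    (hr : ∀ x : ℤ, |x| ≤ (n : ℤ) → ‖r x‖ ≤ 2 / η)
    (hreq : ∀ x : ℤ, |x| ≤ (n : ℤ) →
      r x = ζ + ζ * v * r x * ∑ s ∈ Finset.Icc (-(n : ℤ)) n, r s * K s x)
    {x : ℤ} (hx : |x| + m ≤ (n : ℤ)) {D : ℝ} (hD : 0 ≤ D)
    (hnear : ∀ s : ℤ, |s| ≤ (n : ℤ) → |s - x| < m → ‖r s - w‖ ≤ D) :
    ‖r x - w‖ ≤ 3 / 4 * D + 8 / 3 * θ / η := by
  set box := Finset.Icc (-(n : ℤ)) n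
  have hxn : |x| ≤ (n : ℤ) := by omega
  have hterm : ∀ s ∈ box, ‖r s - w‖ * K s x ≤
      D * K s x + 3 / η * (if (m : ℤ) ≤ |s - x| then K s x else 0) := by
    intro s hs
    have hsn : |s| ≤ (n : ℤ) := abs_le.2 (Finset.mem_Icc.1 hs)
    split_ifs with hfar
    · have hfar_le : ‖r s - w‖ ≤ 3 / η :=
        calc ‖r s - w‖ ≤ 2 / η + 1 / η := (norm_sub_le _ _).trans (add_le_add (hr s hsn) hw)
          _ = 3 / η := by ring
      nlinarith [hK.nonneg s x]
    · have hnear_le := hnear s hsn (not_le.1 hfar)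
      nlinarith [hK.nonneg s x]
  have hsum : ∑ s ∈ box, ‖r s - w‖ * K s x ≤ D * (1 + θ) + 3 / η * θ := by
    refine (Finset.sum_le_sum hterm).trans ?_
    rw [Finset.sum_add_distrib, ← Finset.mul_sum, ← Finset.mul_sum, ← Finset.sum_filter]
    gcongr
    exacts [hK.sum_le x, hK.sum_far_le x]
  have hdev : |∑ s ∈ box, K s x - 1| ≤ θ :=
    abs_le.2 ⟨by linarith [hK.le_sum x hx], by linarith [hK.sum_le x]⟩
  have hT := norm_sum_mul_sub_le box r (K · x) (fun s _ => hK.nonneg s x) w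
  have hcontr := norm_sub_le_of_fixedPoint hη hv hζ hw hweq (hr x hxn) (hreq x hxn)
  have hwdev : ‖w‖ * |∑ s ∈ box, K s x - 1| ≤ 1 / η * θ :=
    mul_le_mul hw hdev (abs_nonneg _) (by positivity)
  have hθ0 := hK.tolerance_nonneg
  calc ‖r x - w‖ ≤ 2 / 3 * (D * (1 + θ) + 3 / η * θ + 1 / η * θ) := by linarith
    _ = 2 / 3 * (1 + θ) * D + 8 / 3 * θ / η := by ring
    _ ≤ 3 / 4 * D + 8 / 3 * θ / η := by gcongr; linarith

theorem norm_fixedPoint_sub_le (hK : IsAlmostStochasticBand K n m θ) (hθ : θ ≤ 1 / 8)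
    (hη : 0 < η) (hv : 4 * ‖v‖ ≤ η ^ 2) (hζ : ‖ζ‖ ≤ 1 / η) (hw : ‖w‖ ≤ 1 / η)
    (hweq : w = ζ + ζ * v * w ^ 2) (hr : ∀ x : ℤ, |x| ≤ (n : ℤ) → ‖r x‖ ≤ 2 / η)
    (hreq : ∀ x : ℤ, |x| ≤ (n : ℤ) →
      r x = ζ + ζ * v * r x * ∑ s ∈ Finset.Icc (-(n : ℤ)) n, r s * K s x)
    (j : ℕ) {x : ℤ} (hx : |x| + j * m ≤ (n : ℤ)) :
    ‖r x - w‖ ≤ (3 / 4) ^ j * (3 / η) + 12 * θ / η := by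
  have hθ0 := hK.tolerance_nonneg
  induction j generalizing x with
  | zero =>
    have htriv : ‖r x - w‖ ≤ 3 / η :=
      calc ‖r x - w‖ ≤ 2 / η + 1 / η :=
            (norm_sub_le _ _).trans (add_le_add (hr x (by simpa using hx)) hw)
        _ = 3 / η := by ring
    simpa using htriv.trans (le_add_of_nonneg_right (by positivity))
  | succ j ih =>
    push_cast at hx
    refine (hK.norm_fixedPoint_sub_le_of_near hθ hη hv hζ hw hweq hr hreq (x := x)
      (by nlinarith) (by positivity) fun s _ hsx => ih ?_).trans ?_
    · linarith [abs_sub_abs_le_abs_sub s x]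
    · calc 3 / 4 * ((3 / 4) ^ j * (3 / η) + 12 * θ / η) + 8 / 3 * θ / η
          = (3 / 4) ^ (j + 1) * (3 / η) + 35 / 3 * θ / η := by ring
        _ ≤ (3 / 4) ^ (j + 1) * (3 / η) + 12 * θ / η := by gcongr; norm_num

end IsAlmostStochasticBand

theorem IsBandProfile.isAlmostStochasticBand {u : ℝ → ℝ} {b ub : ℝ} (hu : IsBandProfile u)
    (hb : 0 < b) (hub : ∀ t, u t ≤ ub) (n m : ℕ) :
    IsAlmostStochasticBand (bandU u b) n m (2 * ((∫ t in Ioi (m / b : ℝ), u t) + ub / b)) where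
  nonneg s x := by
    rw [bandU_eq_bandProfile]
    exact hu.bandProfile_nonneg hb _
  sum_le x := by
    have : 0 ≤ ∫ t in Ioi (m / b : ℝ), u t :=
      setIntegral_nonneg measurableSet_Ioi fun t _ => hu.nonneg t
    linarith [hu.sum_bandU_le hb hub (Finset.Icc (-(n : ℤ)) n) x]
  le_sum _ hx := hu.one_sub_le_sum_bandU hb hub hx
  sum_far_le x := hu.sum_bandU_far_le hb hub m _ x

section SelfConsistentEquation

variable {z c w : ℂ}

theorem mul_neg_sub_eq_one (hz : z ≠ 0) (hw : w = 1 / (-z - c * w)) :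
    w * (-z - c * w) = 1 := by
  have hA : -z - c * w ≠ 0 := by
    intro h
    rw [h, div_zero] at hw
    rw [hw, mul_zero, sub_zero, neg_eq_zero] at h
    exact hz h
  nth_rewrite 1 [hw]
  exact one_div_mul_cancel hA

theorem eq_neg_inv_add_of_eq_one_div (hz : z ≠ 0) (hw : w = 1 / (-z - c * w)) :
    w = -z⁻¹ + -z⁻¹ * c * w ^ 2 := by
  linear_combination (-z⁻¹) * mul_neg_sub_eq_one hz hw - w * inv_mul_cancel₀ hz

theorem norm_le_one_div_abs_im {v : ℝ} (hv : 0 ≤ v) (hz : z.im ≠ 0)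
    (hw : w = 1 / (-z - v * w)) (hsign : 0 ≤ w.im * z.im) : ‖w‖ ≤ 1 / |z.im| := by
  have hz0 : z ≠ 0 := fun h => hz (by rw [h, Complex.zero_im])
  have him : |z.im| ≤ ‖-z - v * w‖ := by
    refine le_trans ?_ (Complex.abs_im_le_norm _)
    rw [show (-z - v * w).im = -(z.im + v * w.im) by simp; ring, abs_neg]
    exact sq_le_sq.1 (by nlinarith [mul_nonneg hv hsign, sq_nonneg (v * w.im)])
  have hnorm : ‖w‖ * ‖-z - v * w‖ = 1 := by
    rw [← norm_mul, mul_neg_sub_eq_one hz0 hw, norm_one]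
  rw [eq_one_div_of_mul_eq_one_left hnorm]
  exact one_div_le_one_div_of_le (abs_pos.2 hz) him

end SelfConsistentEquation

theorem IsBandProfile.norm_fixedPoint_sub_le {u : ℝ → ℝ} {ub v b : ℝ} (hu : IsBandProfile u)
    (hub : ∀ t, u t ≤ ub) (hv : 0 ≤ v) (hb : 1 ≤ b) (n M k : ℕ)
    (hsmall : 2 * ((∫ t in Ioi (M : ℝ), u t) + ub / b) ≤ 1 / 8) {z w : ℂ}
    (hz : 2 * Real.sqrt v + 1 ≤ |z.im|) (hweq : w = 1 / (-z - v * w))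
    (hwsign : 0 ≤ w.im * z.im) {r : ℤ → ℂ}
    (hr : ∀ x : ℤ, |x| ≤ (n : ℤ) → ‖r x‖ ≤ 2 / (2 * Real.sqrt v + 1))
    (hreq : ∀ x : ℤ, |x| ≤ (n : ℤ) → r x = -z⁻¹ + -z⁻¹ * v * r x *
      ∑ s ∈ Finset.Icc (-(n : ℤ)) n, r s * (bandU u b s x : ℂ))
    {x : ℤ} (hx : ((|x| : ℤ) : ℝ) ≤ n - b * (k * M + k : ℕ)) :
    ‖r x - w‖ ≤ 3 * (3 / 4) ^ k + 24 * ((∫ t in Ioi (M : ℝ), u t) + ub / b) := by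
  set η := 2 * Real.sqrt v + 1
  have hη : 1 ≤ η := by linarith [Real.sqrt_nonneg v]
  have hvη : 4 * ‖(v : ℂ)‖ ≤ η ^ 2 := by
    rw [Complex.norm_real, Real.norm_of_nonneg hv]
    nlinarith [Real.sq_sqrt hv, Real.sqrt_nonneg v]
  have hzim : z.im ≠ 0 := fun h => by rw [h, abs_zero] at hz; linarith
  have hζ : ‖-z⁻¹‖ ≤ 1 / η := by
    rw [norm_neg, norm_inv, ← one_div]
    exact one_div_le_one_div_of_le (by positivity) (hz.trans (Complex.abs_im_le_norm z))
  have hw : ‖w‖ ≤ 1 / η := (norm_le_one_div_abs_im hv hzim hweq hwsign).trans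
    (one_div_le_one_div_of_le (by positivity) hz)
  set m := ⌈b * M⌉₊
  have hMm : (M : ℝ) ≤ m / b := by
    rw [le_div_iff₀ (by linarith), mul_comm]
    exact Nat.le_ceil _
  have htail : ∫ t in Ioi (m / b : ℝ), u t ≤ ∫ t in Ioi (M : ℝ), u t :=
    setIntegral_mono_set hu.integrable.integrableOn (ae_of_all _ hu.nonneg)
      (Ioi_subset_Ioi hMm).eventuallyLE
  -- `k` windows of width `m ≤ b (M + 1)` fit between `x` and the boundary.
  have hx' : |x| + k * m ≤ (n : ℤ) := by
    have hm : (m : ℝ) ≤ b * M + b := by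
      linarith [Nat.ceil_lt_add_one (by positivity : 0 ≤ b * M)]
    have hkm : (k : ℝ) * m ≤ b * (k * M + k : ℕ) := by push_cast; nlinarith
    exact_mod_cast (by linarith : ((|x| : ℤ) : ℝ) + k * m ≤ n)
  have hK := hu.isAlmostStochasticBand (by linarith : 0 < b) hub n m
  calc ‖r x - w‖
      ≤ (3 / 4) ^ k * (3 / η) + 12 * (2 * ((∫ t in Ioi (m / b : ℝ), u t) + ub / b)) / η :=
        hK.norm_fixedPoint_sub_le (by linarith) (by positivity) hvη hζ hw
          (eq_neg_inv_add_of_eq_one_div (fun h => hzim (by simp [h])) hweq) hr hreq k hx'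
    _ ≤ (3 / 4) ^ k * 3 + 12 * (2 * ((∫ t in Ioi (m / b : ℝ), u t) + ub / b)) := by
      gcongr
      exacts [div_le_self (by norm_num) hη, div_le_self (by linarith [hK.tolerance_nonneg]) hη]
    _ ≤ 3 * (3 / 4) ^ k + 24 * ((∫ t in Ioi (M : ℝ), u t) + ub / b) := by linarith

theorem band_fixed_point_solution_close_to_w_general
    (v : ℝ) (hv : 0 < v)
    (u : ℝ → ℝ) (hu_even : ∀ t, u (-t) = u t) (hu_nonneg : ∀ t, 0 ≤ u t)
    (hu_bdd : ∃ C, ∀ t, u t ≤ C)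
    (hu_mono : ∀ ⦃s t : ℝ⦄, 0 ≤ s → s ≤ t → u t ≤ u s)
    (hu_L1 : Integrable u) (hu_int : (∫ t, u t) = 1)
    (χ : ℝ) (hχ₁ : 1 / 3 < χ)
    (w : ℂ → ℂ) (hw_eq : ∀ z : ℂ, z.im ≠ 0 → w z = 1 / (-z - (v : ℂ) * w z))
    (hw_sign : ∀ z : ℂ, z.im ≠ 0 → 0 ≤ (w z).im * z.im)
    (r : ℕ → ℂ → ℤ → ℂ)
    (hr_bdd : ∀ (n : ℕ) (z : ℂ), 2 * Real.sqrt v + 1 ≤ |z.im| →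
      ∀ x : ℤ, |x| ≤ (n : ℤ) → ‖r n z x‖ ≤ 2 / (2 * Real.sqrt v + 1))
    (hr_eq : ∀ (n : ℕ) (z : ℂ), 2 * Real.sqrt v + 1 ≤ |z.im| →
      ∀ x : ℤ, |x| ≤ (n : ℤ) →
        r n z x = -z⁻¹ + -z⁻¹ * (v : ℂ) * r n z x *
          ∑ s ∈ Finset.Icc (-(n : ℤ)) (n : ℤ),
            r n z s * ((bandU u ((n : ℝ) ^ χ) s x : ℝ) : ℂ))
    (ε : ℝ) (hε : 0 < ε) :
    ∃ L : ℕ, ∃ n₀ : ℕ, ∀ n : ℕ, n₀ ≤ n →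
      ∀ z : ℂ, 2 * Real.sqrt v + 1 ≤ |z.im| →
        ∀ x : ℤ, ((|x| : ℤ) : ℝ) ≤ (n : ℝ) - (n : ℝ) ^ χ * (L : ℝ) →
          ‖r n z x - w z‖ ≤ ε := by
  have hu : IsBandProfile u := ⟨hu_even, hu_nonneg, hu_mono, hu_L1, hu_int⟩
  obtain ⟨ub, hub⟩ := hu_bdd
  set δ := min (ε / 24) (1 / 8)
  obtain ⟨M, hM⟩ : ∃ M : ℕ, ∫ t in Ioi (M : ℝ), u t ≤ δ / 4 :=
    ((tendsto_integral_Ioi_zero tendsto_natCast_atTop_atTop).eventually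
      (ge_mem_nhds (by positivity))).exists
  obtain ⟨k, hk⟩ : ∃ k : ℕ, (3 / 4 : ℝ) ^ k < ε / 6 :=
    exists_pow_lt_of_lt_one (by positivity) (by norm_num)
  have hb_large : ∀ᶠ n : ℕ in atTop, 1 ≤ (n : ℝ) ^ χ ∧ ub / (n : ℝ) ^ χ ≤ δ / 4 := by
    have h := (tendsto_rpow_atTop (by linarith : 0 < χ)).comp tendsto_natCast_atTop_atTop
    exact (h.eventually_ge_atTop 1).and
      ((tendsto_const_nhds.div_atTop h).eventually (ge_mem_nhds (by positivity)))
  obtain ⟨n₀, hn₀⟩ := eventually_atTop.1 hb_large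
  refine ⟨k * M + k, n₀, fun n hn z hz x hx => ?_⟩
  obtain ⟨hb, hub_b⟩ := hn₀ n hn
  have hzim : z.im ≠ 0 := fun h => by
    rw [h, abs_zero] at hz; linarith [Real.sqrt_nonneg v]
  have hδε := min_le_left (ε / 24) (1 / 8)
  refine (hu.norm_fixedPoint_sub_le hub hv.le hb n M k
    (by linarith [min_le_right (ε / 24) (1 / 8)]) hz (hw_eq z hzim) (hw_sign z hzim)
    (hr_bdd n z hz) (hr_eq n z hz) hx).trans ?_
  linarith

/-- Proposition 4.1: the solution of the fixed-point system is close to w(z) on B_L. -/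
theorem band_fixed_point_solution_close_to_w
    (v : ℝ) (hv : 0 < v)
    (u : ℝ → ℝ) (hu_even : ∀ t, u (-t) = u t) (hu_nonneg : ∀ t, 0 ≤ u t)
    (hu_meas : Measurable u) (hu_bdd : ∃ C, ∀ t, u t ≤ C)
    (hu_mono : ∀ ⦃s t : ℝ⦄, 0 ≤ s → s ≤ t → u t ≤ u s)
    (hu_L1 : Integrable u) (hu_int : (∫ t, u t) = 1)
    (χ : ℝ) (hχ₁ : 1 / 3 < χ) (hχ₂ : χ < 1)
    (w : ℂ → ℂ) (hw_eq : ∀ z : ℂ, z.im ≠ 0 → w z = 1 / (-z - (v : ℂ) * w z))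
    (hw_sign : ∀ z : ℂ, z.im ≠ 0 → 0 ≤ (w z).im * z.im)
    (r : ℕ → ℂ → ℤ → ℂ)
    (hr_bdd : ∀ (n : ℕ) (z : ℂ), 2 * Real.sqrt v + 1 ≤ |z.im| →
      ∀ x : ℤ, |x| ≤ (n : ℤ) → ‖r n z x‖ ≤ 2 / (2 * Real.sqrt v + 1))
    (hr_eq : ∀ (n : ℕ) (z : ℂ), 2 * Real.sqrt v + 1 ≤ |z.im| →
      ∀ x : ℤ, |x| ≤ (n : ℤ) →
        r n z x = -z⁻¹ + -z⁻¹ * (v : ℂ) * r n z x *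
          ∑ s ∈ Finset.Icc (-(n : ℤ)) (n : ℤ),
            r n z s * ((bandU u ((n : ℝ) ^ χ) s x : ℝ) : ℂ))
    (ε : ℝ) (hε : 0 < ε) :
    ∃ L : ℕ, ∃ n₀ : ℕ, ∀ n : ℕ, n₀ ≤ n →
      ∀ z : ℂ, 2 * Real.sqrt v + 1 ≤ |z.im| →
        ∀ x : ℤ, ((|x| : ℤ) : ℝ) ≤ (n : ℝ) - (n : ℝ) ^ χ * (L : ℝ) →
          ‖r n z x - w z‖ ≤ ε :=
  band_fixed_point_solution_close_to_w_general v hv u hu_even hu_nonneg hu_bdd hu_mono hu_L1 hu_int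
    χ hχ₁ w hw_eq hw_sign r hr_bdd hr_eq ε hε
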